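/- arXiv:2503.06133 — 2 statements merged into one kernel-verified Lean document; each statement's English description precedes it below -/
import Mathlib

section
/- Let Δ be a balanced normal d-pseudomanifold with d ≥ 3. Then its balanced genus satisfies 𝒢(Δ) ≥ 1 + ((d−3)/8)·f_d(Δ); moreover, f_d(Δ) ≥ 4·f_{d−2}^{ij}(Δ) for every two-element subset {i,j} ⊆ [d]. -/
/-- A finite abstract simplicial complex with vertex set contained in `ℕ`:
a finite collection of finite sets (faces) closed under taking subsets. -/
structure SComplex where
  faces : Finset (Finset ℕ)
  down_closed : ∀ σ ∈ faces, ∀ τ, τ ⊆ σ → τ ∈ faces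

namespace SComplex

/-- The facets: the inclusion-maximal faces. -/
def facets (Δ : SComplex) : Finset (Finset ℕ) :=
  Δ.faces.filter fun σ => ∀ τ ∈ Δ.faces, σ ⊆ τ → σ = τ

/-- `Δ` is pure of dimension `d`: every facet has exactly `d+1` vertices. -/
def Pure (Δ : SComplex) (d : ℕ) : Prop :=
  ∀ σ ∈ Δ.facets, σ.card = d + 1

/-- The link of a face `σ`:  `lk (σ,Δ) = {γ ∈ Δ : γ ∩ σ = ∅ and γ ∪ σ ∈ Δ}`. -/
def lk (Δ : SComplex) (σ : Finset ℕ) : SComplex where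
  faces := Δ.faces.filter fun γ => γ ∩ σ = ∅ ∧ γ ∪ σ ∈ Δ.faces
  down_closed := by
    intro γ hγ τ hτ
    rw [Finset.mem_filter] at hγ ⊢
    refine ⟨Δ.down_closed γ hγ.1 τ hτ, ?_, ?_⟩
    · exact Finset.subset_empty.1 (hγ.2.1 ▸ Finset.inter_subset_inter hτ Finset.Subset.rfl)
    · exact Δ.down_closed _ hγ.2.2 _ (Finset.union_subset_union hτ Finset.Subset.rfl)

/-- The number of vertices of a complex. -/
def vertCount (Δ : SComplex) : ℕ := (Δ.faces.filter fun σ => σ.card = 1).card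

/-- The degree of a face: the number of vertices of its link. -/
def deg (Δ : SComplex) (σ : Finset ℕ) : ℕ := (Δ.lk σ).vertCount

/-- Connectivity of a complex: any two vertices are joined by an edge-path. -/
def Conn (Δ : SComplex) : Prop :=
  ∀ u v : ℕ, {u} ∈ Δ.faces → {v} ∈ Δ.faces →
    Relation.ReflTransGen (fun a b => a ≠ b ∧ ({a, b} : Finset ℕ) ∈ Δ.faces) u v

/-- A normal `d`-pseudomanifold: a pure `d`-dimensional complex in which every
`(d-1)`-face is contained in exactly two facets, any two facets are connected by a
sequence of facets in which consecutive facets share a `(d-1)`-face, and the link of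
every face of dimension at most `d-2` is connected. -/
def IsNormalPseudomanifold (Δ : SComplex) (d : ℕ) : Prop :=
  Δ.faces.Nonempty ∧ Δ.Pure d ∧
  (∀ σ ∈ Δ.faces, σ.card = d → (Δ.facets.filter fun τ => σ ⊆ τ).card = 2) ∧
  (∀ σ ∈ Δ.facets, ∀ τ ∈ Δ.facets,
    Relation.ReflTransGen
      (fun α β => α ∈ Δ.facets ∧ β ∈ Δ.facets ∧ (α ∩ β).card = d) σ τ) ∧
  (∀ σ ∈ Δ.faces, σ.card + 1 ≤ d → (Δ.lk σ).Conn)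

/-- The Euler characteristic `χ(Δ) = Σ_i (-1)^i f_i(Δ)`. -/
def eulerChar (Δ : SComplex) : ℤ :=
  ∑ σ ∈ Δ.faces.filter (fun σ => σ ≠ ∅), (-1 : ℤ) ^ (σ.card + 1)

/-- The geometric carrier `‖Δ‖` of a complex, realized in `ℝ^ℕ`. -/
def carrier (Δ : SComplex) : Set (ℕ → ℝ) :=
  {f | ∃ σ ∈ Δ.faces, (∀ v, v ∉ σ → f v = 0) ∧ (∀ v, 0 ≤ f v) ∧ ∑ v ∈ σ, f v = 1}

/-- The 1-skeleton of `Δ`, as a simple graph on `ℕ`. -/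
def graph (Δ : SComplex) : SimpleGraph ℕ where
  Adj u v := u ≠ v ∧ ({u, v} : Finset ℕ) ∈ Δ.faces
  symm := ⟨by
    rintro u v ⟨h1, h2⟩
    exact ⟨h1.symm, by rwa [Finset.pair_comm]⟩⟩
  loopless := ⟨fun v h => h.1 rfl⟩

end SComplex

/-- A balanced complex of dimension `d`: a simplicial complex together with a proper
vertex coloring by the `d+1` colors `[d] = {0,…,d}`. -/
structure BalancedComplex (d : ℕ) extends SComplex where
  κ : ℕ → Fin (d + 1)
  proper : ∀ σ ∈ faces, ∀ u ∈ σ, ∀ v ∈ σ, κ u = κ v → u = v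

namespace BalancedComplex

variable {d : ℕ}

/-- The flag f-number `f_S`: the number of faces with color set exactly `S`. -/
def fS (Δ : BalancedComplex d) (S : Finset (Fin (d + 1))) : ℕ :=
  (Δ.faces.filter fun σ => σ.image Δ.κ = S).card

/-- `f_i`: the number of `i`-dimensional faces. -/
def fNum (Δ : BalancedComplex d) (i : ℕ) : ℕ :=
  (Δ.faces.filter fun σ => σ.card = i + 1).card

/-- The rank-selected subcomplex `Δ_S`. -/
def restrict (Δ : BalancedComplex d) (S : Finset (Fin (d + 1))) : SComplex where
  faces := Δ.faces.filter fun σ => σ.image Δ.κ ⊆ S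
  down_closed := by
    intro σ hσ τ hτ
    rw [Finset.mem_filter] at hσ ⊢
    exact ⟨Δ.down_closed σ hσ.1 τ hτ, (Finset.image_subset_image hτ).trans hσ.2⟩

/-- `Γ_S(Δ) = f_S(Δ) - Σ_{i ∈ S} f_{{i}}(Δ)`. -/
def Gamma (Δ : BalancedComplex d) (S : Finset (Fin (d + 1))) : ℤ :=
  (Δ.fS S : ℤ) - ∑ i ∈ S, (Δ.fS {i} : ℤ)

/-- The balanced ε-genus
`ρ_ε(Δ) = 1 - ((1-d)/4)·f_d(Δ) - (1/2)·Σ_{i ∈ Z_{d+1}} f_{d-2}^{ε_i ε_{i+1}}(Δ)`,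
where a cyclic permutation of `[d]` is recorded as a permutation `ε` of `Fin (d+1)`
read cyclically. -/
def rho (Δ : BalancedComplex d) (ε : Equiv.Perm (Fin (d + 1))) : ℚ :=
  1 - (1 - (d : ℚ)) / 4 * (Δ.fNum d : ℚ)
    - (1 / 2) * ∑ i : Fin (d + 1), (Δ.fS (Finset.univ \ {ε i, ε (i + 1)}) : ℚ)

/-- The balanced genus `𝒢(Δ)`: the minimum of `ρ_ε(Δ)` over all cyclic permutations. -/
def genus (Δ : BalancedComplex d) : ℚ :=
  (Finset.univ.image Δ.rho).min'
    (Finset.Nonempty.image ⟨1, Finset.mem_univ 1⟩ Δ.rho)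

end BalancedComplex

open Finset in
private lemma exists_facet_sup (Δ : SComplex) {σ : Finset ℕ} (hσ : σ ∈ Δ.faces) :
    ∃ τ ∈ Δ.facets, σ ⊆ τ := by
  classical
  obtain ⟨m, hm, hmax⟩ := Finset.exists_maximal (s := Δ.faces.filter fun τ => σ ⊆ τ)
    ⟨σ, Finset.mem_filter.2 ⟨hσ, Finset.Subset.rfl⟩⟩
  simp only [Finset.mem_filter] at hm
  refine ⟨m, Finset.mem_filter.2 ⟨hm.1, ?_⟩, hm.2⟩
  intro ρ hρ hsub
  by_contra hne
  exact hne (le_antisymm hsub (hmax (Finset.mem_filter.2 ⟨hρ, hm.2.trans hsub⟩) hsub))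

open Finset in
private lemma color_fresh {d : ℕ} (Δ : BalancedComplex d) {ρ : Finset ℕ} {w : ℕ}
    (hw : w ∉ ρ) (hf : insert w ρ ∈ Δ.faces) : Δ.κ w ∉ ρ.image Δ.κ := by
  intro hmem
  obtain ⟨x, hx, hxe⟩ := Finset.mem_image.1 hmem
  have : w = x := Δ.proper _ hf w (mem_insert_self _ _) x (mem_insert_of_mem hx) hxe.symm
  exact hw (this ▸ hx)

open Finset in
private lemma two_completions {d : ℕ} (Δ : BalancedComplex d)
    (hpure : Δ.toSComplex.Pure d)
    (h2 : ∀ σ ∈ Δ.faces, σ.card = d →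
      (Δ.toSComplex.facets.filter fun τ => σ ⊆ τ).card = 2)
    {ρ : Finset ℕ} (hρ : ρ ∈ Δ.faces) (hc : ρ.card = d) :
    ∃ w1 w2, w1 ≠ w2 ∧ w1 ∉ ρ ∧ w2 ∉ ρ ∧
      insert w1 ρ ∈ Δ.toSComplex.facets ∧ insert w2 ρ ∈ Δ.toSComplex.facets ∧
      ∀ τ ∈ Δ.toSComplex.facets, ρ ⊆ τ → τ = insert w1 ρ ∨ τ = insert w2 ρ := by
  classical
  obtain ⟨τ1, τ2, htne, hfil⟩ := Finset.card_eq_two.1 (h2 ρ hρ hc)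
  have hmem : ∀ τ ∈ ({τ1, τ2} : Finset (Finset ℕ)),
      τ ∈ Δ.toSComplex.facets ∧ ρ ⊆ τ := by
    intro τ hτ
    rw [← hfil] at hτ
    exact Finset.mem_filter.1 hτ
  have getw : ∀ τ, τ ∈ Δ.toSComplex.facets → ρ ⊆ τ → ∃ w, w ∉ ρ ∧ τ = insert w ρ := by
    intro τ hτf hτs
    have hcτ : τ.card = d + 1 := hpure τ hτf
    have hsd : (τ \ ρ).card = 1 := by
      rw [Finset.card_sdiff_of_subset hτs, hcτ, hc]; omega
    obtain ⟨w, hw⟩ := Finset.card_eq_one.1 hsd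
    have hwm : w ∈ τ \ ρ := hw ▸ Finset.mem_singleton_self w
    refine ⟨w, (Finset.mem_sdiff.1 hwm).2, ?_⟩
    have := Finset.union_sdiff_of_subset hτs
    rw [hw] at this
    rw [← this, Finset.union_comm]; exact (Finset.insert_eq w ρ).symm
  obtain ⟨w1, hw1, he1⟩ := getw τ1 (hmem τ1 (mem_insert_self _ _)).1 (hmem τ1 (mem_insert_self _ _)).2
  obtain ⟨w2, hw2, he2⟩ := getw τ2 (hmem τ2 (by simp)).1 (hmem τ2 (by simp)).2
  refine ⟨w1, w2, ?_, hw1, hw2, he1 ▸ (hmem τ1 (mem_insert_self _ _)).1,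
    he2 ▸ (hmem τ2 (by simp)).1, ?_⟩
  · intro h; exact htne (by rw [he1, he2, h])
  · intro τ hτf hτs
    have : τ ∈ ({τ1, τ2} : Finset (Finset ℕ)) := by
      rw [← hfil]; exact Finset.mem_filter.2 ⟨hτf, hτs⟩
    rcases Finset.mem_insert.1 this with h | h
    · left; rw [h, he1]
    · right; rw [Finset.mem_singleton.1 h, he2]

open Finset in
private lemma four_facets {d : ℕ} (hd : 3 ≤ d) (Δ : BalancedComplex d)
    (hpure : Δ.toSComplex.Pure d)
    (h2 : ∀ σ ∈ Δ.faces, σ.card = d →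
      (Δ.toSComplex.facets.filter fun τ => σ ⊆ τ).card = 2)
    {i j : Fin (d + 1)} (hij : i ≠ j) {σ : Finset ℕ}
    (hσ : σ ∈ Δ.faces) (himg : σ.image Δ.κ = Finset.univ \ {i, j}) :
    4 ≤ (Δ.toSComplex.facets.filter fun τ => σ ⊆ τ).card := by
  classical
  have hinj : Set.InjOn Δ.κ σ := fun x hx y hy h => Δ.proper σ hσ x hx y hy h
  have hσcard : σ.card + 1 = d := by
    have hci := Finset.card_image_of_injOn hinj
    rw [himg, Finset.card_sdiff_of_subset (Finset.subset_univ _), Finset.card_univ,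
      Fintype.card_fin, Finset.card_pair hij] at hci
    omega
  obtain ⟨τ0, hτ0f, hτ0s⟩ := exists_facet_sup Δ.toSComplex hσ
  have hτ0c : τ0.card = d + 1 := hpure τ0 hτ0f
  have hτ0faces : τ0 ∈ Δ.faces := (Finset.mem_filter.1 hτ0f).1
  have hpos : 0 < (τ0 \ σ).card := by rw [Finset.card_sdiff_of_subset hτ0s]; omega
  obtain ⟨u0, hu0⟩ := Finset.card_pos.1 hpos
  obtain ⟨hu0τ, hu0σ⟩ := Finset.mem_sdiff.1 hu0
  set ρ0 := insert u0 σ with hρ0def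
  have hσρ0 : σ ⊆ ρ0 := Finset.subset_insert _ _
  have hρ0f : ρ0 ∈ Δ.faces := Δ.down_closed τ0 hτ0faces ρ0 (Finset.insert_subset hu0τ hτ0s)
  have hρ0c : ρ0.card = d := by rw [Finset.card_insert_of_notMem hu0σ]; omega
  obtain ⟨w1, w2, hw12, hw1ρ0, hw2ρ0, ht1f, ht2f, hC0⟩ :=
    two_completions Δ hpure h2 hρ0f hρ0c
  set t1 := insert w1 ρ0 with ht1def
  set t2 := insert w2 ρ0 with ht2def
  have ht1faces : t1 ∈ Δ.faces := (Finset.mem_filter.1 ht1f).1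
  have ht2faces : t2 ∈ Δ.faces := (Finset.mem_filter.1 ht2f).1
  have hw1σ : w1 ∉ σ := fun h => hw1ρ0 (Finset.mem_insert_of_mem h)
  have hw2σ : w2 ∉ σ := fun h => hw2ρ0 (Finset.mem_insert_of_mem h)
  have hw1u0 : w1 ≠ u0 := fun h => hw1ρ0 (h ▸ Finset.mem_insert_self _ _)
  have hw2u0 : w2 ≠ u0 := fun h => hw2ρ0 (h ▸ Finset.mem_insert_self _ _)
  set ρ1 := insert w1 σ with hρ1def
  have hσρ1 : σ ⊆ ρ1 := Finset.subset_insert _ _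
  have hρ1f : ρ1 ∈ Δ.faces := Δ.down_closed t1 ht1faces ρ1
    (Finset.insert_subset (Finset.mem_insert_self _ _)
      (hσρ0.trans (Finset.subset_insert _ _)))
  have hρ1c : ρ1.card = d := by rw [Finset.card_insert_of_notMem hw1σ]; omega
  obtain ⟨x1, x2, hx12, hx1ρ1, hx2ρ1, hxf1, hxf2, hC1⟩ :=
    two_completions Δ hpure h2 hρ1f hρ1c
  have ht1eq : t1 = insert u0 ρ1 := Finset.insert_comm w1 u0 σ
  have ht1ρ1 : ρ1 ⊆ t1 := by rw [ht1eq]; exact Finset.subset_insert _ _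
  obtain ⟨u1, hu1u0, hu1ρ1, ht3f⟩ :
      ∃ u1, u1 ≠ u0 ∧ u1 ∉ ρ1 ∧ insert u1 ρ1 ∈ Δ.toSComplex.facets := by
    rcases hC1 t1 ht1f ht1ρ1 with h | h
    · have hx : x1 = u0 := by
        have hx1t : x1 ∈ insert u0 ρ1 := by rw [← ht1eq, h]; exact Finset.mem_insert_self _ _
        rcases Finset.mem_insert.1 hx1t with h' | h'
        · exact h'
        · exact absurd h' hx1ρ1
      exact ⟨x2, hx ▸ hx12.symm, hx2ρ1, hxf2⟩
    · have hx : x2 = u0 := by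
        have hx2t : x2 ∈ insert u0 ρ1 := by rw [← ht1eq, h]; exact Finset.mem_insert_self _ _
        rcases Finset.mem_insert.1 hx2t with h' | h'
        · exact h'
        · exact absurd h' hx2ρ1
      exact ⟨x1, hx ▸ hx12, hx1ρ1, hxf1⟩
  set t3 := insert u1 ρ1 with ht3def
  have ht3faces : t3 ∈ Δ.faces := (Finset.mem_filter.1 ht3f).1
  have hu1σ : u1 ∉ σ := fun h => hu1ρ1 (Finset.mem_insert_of_mem h)
  have hu1w1 : u1 ≠ w1 := fun h => hu1ρ1 (h ▸ Finset.mem_insert_self _ _)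
  set ρ2 := insert u1 σ with hρ2def
  have hσρ2 : σ ⊆ ρ2 := Finset.subset_insert _ _
  have hρ2f : ρ2 ∈ Δ.faces := Δ.down_closed t3 ht3faces ρ2
    (Finset.insert_subset (Finset.mem_insert_self _ _)
      (hσρ1.trans (Finset.subset_insert _ _)))
  have hρ2c : ρ2.card = d := by rw [Finset.card_insert_of_notMem hu1σ]; omega
  obtain ⟨y1, y2, hy12, hy1ρ2, hy2ρ2, hyf1, hyf2, hC2⟩ :=
    two_completions Δ hpure h2 hρ2f hρ2c
  have ht3eq : t3 = insert w1 ρ2 := Finset.insert_comm u1 w1 σ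
  have ht3ρ2 : ρ2 ⊆ t3 := by rw [ht3eq]; exact Finset.subset_insert _ _
  obtain ⟨w3, hw3w1, hw3ρ2, ht4f⟩ :
      ∃ w3, w3 ≠ w1 ∧ w3 ∉ ρ2 ∧ insert w3 ρ2 ∈ Δ.toSComplex.facets := by
    rcases hC2 t3 ht3f ht3ρ2 with h | h
    · have hy : y1 = w1 := by
        have hy1t : y1 ∈ insert w1 ρ2 := by rw [← ht3eq, h]; exact Finset.mem_insert_self _ _
        rcases Finset.mem_insert.1 hy1t with h' | h'
        · exact h'
        · exact absurd h' hy1ρ2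
      exact ⟨y2, hy ▸ hy12.symm, hy2ρ2, hyf2⟩
    · have hy : y2 = w1 := by
        have hy2t : y2 ∈ insert w1 ρ2 := by rw [← ht3eq, h]; exact Finset.mem_insert_self _ _
        rcases Finset.mem_insert.1 hy2t with h' | h'
        · exact h'
        · exact absurd h' hy2ρ2
      exact ⟨y1, hy ▸ hy12, hy1ρ2, hyf1⟩
  set t4 := insert w3 ρ2 with ht4def
  -- colors
  have hcol : ∀ v, v ∉ σ → insert v σ ∈ Δ.faces → Δ.κ v = i ∨ Δ.κ v = j := by
    intro v hv hf
    have hfr := color_fresh Δ hv hf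
    rw [himg] at hfr
    have h' : Δ.κ v ∈ ({i, j} : Finset (Fin (d + 1))) := by
      by_contra hc
      exact hfr (Finset.mem_sdiff.2 ⟨Finset.mem_univ _, hc⟩)
    simpa using h'
  have hcu0 := hcol u0 hu0σ hρ0f
  have hcw1 := hcol w1 hw1σ hρ1f
  have hinsw2 : insert w2 σ ∈ Δ.faces := Δ.down_closed t2 ht2faces _
    (Finset.insert_subset (Finset.mem_insert_self _ _)
      (hσρ0.trans (Finset.subset_insert _ _)))
  have hcw2 := hcol w2 hw2σ hinsw2
  have hcu1 := hcol u1 hu1σ hρ2f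
  have hne1 : Δ.κ w2 ≠ Δ.κ u0 := fun h =>
    color_fresh Δ hw2ρ0 ht2faces (Finset.mem_image.2 ⟨u0, Finset.mem_insert_self _ _, h.symm⟩)
  have hne3 : Δ.κ u1 ≠ Δ.κ w1 := fun h =>
    color_fresh Δ hu1ρ1 ht3faces (Finset.mem_image.2 ⟨w1, Finset.mem_insert_self _ _, h.symm⟩)
  have hne0 : Δ.κ w1 ≠ Δ.κ u0 := fun h =>
    color_fresh Δ hw1ρ0 ht1faces (Finset.mem_image.2 ⟨u0, Finset.mem_insert_self _ _, h.symm⟩)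
  have hu1w2 : u1 ≠ w2 := by
    intro h
    have hk : Δ.κ u1 = Δ.κ w2 := by rw [h]
    rcases hcu0 with a | a <;> rcases hcw1 with b | b <;> rcases hcw2 with c | c <;>
      rcases hcu1 with e | e <;> simp_all
  -- distinctness
  have hw1t2 : w1 ∉ t2 := by
    intro h
    rcases Finset.mem_insert.1 h with h' | h'
    · exact hw12 h'
    · exact hw1ρ0 h'
  have hu1t1 : u1 ∉ t1 := by
    rw [ht1eq]
    intro h
    rcases Finset.mem_insert.1 h with h' | h'
    · exact hu1u0 h'
    · exact hu1ρ1 h'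
  have hu1t2 : u1 ∉ t2 := by
    intro h
    rcases Finset.mem_insert.1 h with h' | h'
    · exact hu1w2 h'
    · rcases Finset.mem_insert.1 h' with h'' | h''
      · exact hu1u0 h''
      · exact hu1σ h''
  have hw3t3 : w3 ∉ t3 := by
    rw [ht3eq]
    intro h
    rcases Finset.mem_insert.1 h with h' | h'
    · exact hw3w1 h'
    · exact hw3ρ2 h'
  have ht12 : t1 ≠ t2 := by
    intro h; apply hw1t2; rw [← h]; exact Finset.mem_insert_self _ _
  have ht13 : t1 ≠ t3 := by
    intro h; apply hu1t1; rw [h]; exact Finset.mem_insert_self _ _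
  have ht23 : t2 ≠ t3 := by
    intro h; apply hw1t2; rw [h]; exact Finset.mem_insert_of_mem (Finset.mem_insert_self _ _)
  have ht14 : t1 ≠ t4 := by
    intro h; apply hu1t1; rw [h]; exact Finset.mem_insert_of_mem (Finset.mem_insert_self _ _)
  have ht24 : t2 ≠ t4 := by
    intro h; apply hu1t2; rw [h]; exact Finset.mem_insert_of_mem (Finset.mem_insert_self _ _)
  have ht34 : t3 ≠ t4 := by
    intro h; apply hw3t3; rw [h]; exact Finset.mem_insert_self _ _
  -- the four facets all contain σ
  have hm1 : t1 ∈ Δ.toSComplex.facets.filter fun τ => σ ⊆ τ :=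
    Finset.mem_filter.2 ⟨ht1f, hσρ0.trans (Finset.subset_insert _ _)⟩
  have hm2 : t2 ∈ Δ.toSComplex.facets.filter fun τ => σ ⊆ τ :=
    Finset.mem_filter.2 ⟨ht2f, hσρ0.trans (Finset.subset_insert _ _)⟩
  have hm3 : t3 ∈ Δ.toSComplex.facets.filter fun τ => σ ⊆ τ :=
    Finset.mem_filter.2 ⟨ht3f, hσρ1.trans (Finset.subset_insert _ _)⟩
  have hm4 : t4 ∈ Δ.toSComplex.facets.filter fun τ => σ ⊆ τ :=
    Finset.mem_filter.2 ⟨ht4f, hσρ2.trans (Finset.subset_insert _ _)⟩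
  have hsub4 : ({t1, t2, t3, t4} : Finset (Finset ℕ)) ⊆
      Δ.toSComplex.facets.filter fun τ => σ ⊆ τ := by
    intro t ht
    simp only [Finset.mem_insert, Finset.mem_singleton] at ht
    rcases ht with rfl | rfl | rfl | rfl
    exacts [hm1, hm2, hm3, hm4]
  have hcard4 : ({t1, t2, t3, t4} : Finset (Finset ℕ)).card = 4 := by
    rw [Finset.card_insert_of_notMem (by simp [ht12, ht13, ht14]),
      Finset.card_insert_of_notMem (by simp [ht23, ht24]),
      Finset.card_insert_of_notMem (by simp [ht34]), Finset.card_singleton]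
  calc 4 = ({t1, t2, t3, t4} : Finset (Finset ℕ)).card := hcard4.symm
    _ ≤ _ := Finset.card_le_card hsub4

open Finset in
private lemma key_count {d : ℕ} (hd : 3 ≤ d) (Δ : BalancedComplex d)
    (hΔ : Δ.toSComplex.IsNormalPseudomanifold d) {i j : Fin (d + 1)} (hij : i ≠ j) :
    4 * Δ.fS (Finset.univ \ {i, j}) ≤ Δ.fNum d := by
  classical
  obtain ⟨-, hpure, h2, -, -⟩ := hΔ
  have hfacets_eq : Δ.faces.filter (fun σ => σ.card = d + 1) = Δ.toSComplex.facets := by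
    ext τ
    constructor
    · intro hm
      obtain ⟨hτ, hc⟩ := Finset.mem_filter.1 hm
      obtain ⟨ρ, hρf, hρs⟩ := exists_facet_sup Δ.toSComplex hτ
      have hρc := hpure ρ hρf
      have : τ = ρ := Finset.eq_of_subset_of_card_le hρs (by omega)
      rwa [this]
    · intro h
      exact Finset.mem_filter.2 ⟨(Finset.mem_filter.1 h).1, hpure τ h⟩
  have hfnum : Δ.fNum d = Δ.toSComplex.facets.card := by
    rw [BalancedComplex.fNum, hfacets_eq]
  set S := (Finset.univ \ {i, j} : Finset (Fin (d + 1))) with hSdef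
  set A := Δ.faces.filter (fun σ => σ.image Δ.κ = S) with hA
  have hfS : Δ.fS S = A.card := rfl
  set Φ : Finset ℕ → Finset ℕ := fun τ => τ.filter (fun v => Δ.κ v ∈ S) with hΦ
  have hmap : ∀ τ ∈ Δ.toSComplex.facets, Φ τ ∈ A := by
    intro τ hτ
    have hτfaces : τ ∈ Δ.faces := (Finset.mem_filter.1 hτ).1
    have hτc : τ.card = d + 1 := hpure τ hτ
    have hinj : Set.InjOn Δ.κ τ := fun x hx y hy h => Δ.proper τ hτfaces x hx y hy h
    have himg : τ.image Δ.κ = Finset.univ := by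
      apply Finset.eq_univ_of_card
      rw [Finset.card_image_of_injOn hinj, hτc, Fintype.card_fin]
    refine Finset.mem_filter.2 ⟨Δ.down_closed τ hτfaces _ (Finset.filter_subset _ _), ?_⟩
    apply Finset.Subset.antisymm
    · intro c hc
      obtain ⟨v, hv, rfl⟩ := Finset.mem_image.1 hc
      exact (Finset.mem_filter.1 hv).2
    · intro c hc
      have : c ∈ τ.image Δ.κ := himg ▸ Finset.mem_univ c
      obtain ⟨v, hv, rfl⟩ := Finset.mem_image.1 this
      exact Finset.mem_image.2 ⟨v, Finset.mem_filter.2 ⟨hv, hc⟩, rfl⟩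
  have hfib : ∀ σ ∈ A, Δ.toSComplex.facets.filter (fun τ => Φ τ = σ)
      = Δ.toSComplex.facets.filter (fun τ => σ ⊆ τ) := by
    intro σ hσA
    obtain ⟨hσf, hσS⟩ := Finset.mem_filter.1 hσA
    ext τ
    simp only [Finset.mem_filter]
    refine and_congr_right fun hτ => ?_
    have hτfaces : τ ∈ Δ.faces := (Finset.mem_filter.1 hτ).1
    constructor
    · rintro rfl; exact Finset.filter_subset _ _
    · intro hsub
      apply Finset.Subset.antisymm
      · intro v hv
        obtain ⟨hvτ, hvS⟩ := Finset.mem_filter.1 hv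
        rw [← hσS] at hvS
        obtain ⟨x, hx, hxe⟩ := Finset.mem_image.1 hvS
        have : x = v := Δ.proper τ hτfaces x (hsub hx) v hvτ hxe
        exact this ▸ hx
      · intro v hv
        refine Finset.mem_filter.2 ⟨hsub hv, ?_⟩
        rw [← hσS]
        exact Finset.mem_image_of_mem _ hv
  have hcount := Finset.card_eq_sum_card_fiberwise hmap
  have hbound : ∀ σ ∈ A, 4 ≤ (Δ.toSComplex.facets.filter (fun τ => Φ τ = σ)).card := by
    intro σ hσA
    rw [hfib σ hσA]
    obtain ⟨hσf, hσS⟩ := Finset.mem_filter.1 hσA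
    exact four_facets hd Δ hpure h2 hij hσf hσS
  calc 4 * Δ.fS S = ∑ _σ ∈ A, 4 := by rw [Finset.sum_const, hfS, smul_eq_mul, mul_comm]
    _ ≤ ∑ σ ∈ A, (Δ.toSComplex.facets.filter (fun τ => Φ τ = σ)).card :=
        Finset.sum_le_sum hbound
    _ = Δ.toSComplex.facets.card := hcount.symm
    _ = Δ.fNum d := hfnum.symm

/-- Let `Δ` be a balanced normal `d`-pseudomanifold with `d ≥ 3`.
Then `𝒢(Δ) ≥ 1 + ((d-3)/8)·f_d(Δ)`; moreover `f_d(Δ) ≥ 4·f_{d-2}^{ij}(Δ)` for every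
two-element subset `{i,j} ⊆ [d]`. -/
theorem statement4 (d : ℕ) (hd : 3 ≤ d) (Δ : BalancedComplex d)
    (hΔ : Δ.toSComplex.IsNormalPseudomanifold d) :
    (1 + ((d : ℚ) - 3) / 8 * (Δ.fNum d : ℚ) ≤ Δ.genus) ∧
    (∀ i j : Fin (d + 1), i ≠ j →
      4 * Δ.fS (Finset.univ \ {i, j}) ≤ Δ.fNum d) := by
  classical
  have key : ∀ i j : Fin (d + 1), i ≠ j → 4 * Δ.fS (Finset.univ \ {i, j}) ≤ Δ.fNum d :=
    fun i j hij => key_count hd Δ hΔ hij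
  refine ⟨?_, key⟩
  have hone : (1 : Fin (d + 1)) ≠ 0 := by
    intro h
    have h2 := congrArg Fin.val h
    rw [Fin.val_one', Nat.mod_eq_of_lt (by omega)] at h2
    simp at h2
  have hρ : ∀ ε : Equiv.Perm (Fin (d + 1)),
      1 + ((d : ℚ) - 3) / 8 * (Δ.fNum d : ℚ) ≤ Δ.rho ε := by
    intro ε
    have hterm : ∀ ii : Fin (d + 1),
        (Δ.fS (Finset.univ \ {ε ii, ε (ii + 1)}) : ℚ) ≤ (Δ.fNum d : ℚ) / 4 := by
      intro ii
      have hne : ε ii ≠ ε (ii + 1) := by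
        intro h
        exact hone (left_eq_add.1 (ε.injective h))
      have h4 := key _ _ hne
      have h4' : ((4 * Δ.fS (Finset.univ \ {ε ii, ε (ii + 1)}) : ℕ) : ℚ)
          ≤ ((Δ.fNum d : ℕ) : ℚ) := by exact_mod_cast h4
      push_cast at h4'
      linarith
    have hsum : ∑ ii : Fin (d + 1), (Δ.fS (Finset.univ \ {ε ii, ε (ii + 1)}) : ℚ)
        ≤ ((d : ℚ) + 1) * (Δ.fNum d : ℚ) / 4 := by
      calc ∑ ii : Fin (d + 1), (Δ.fS (Finset.univ \ {ε ii, ε (ii + 1)}) : ℚ)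
          ≤ ∑ _ii : Fin (d + 1), (Δ.fNum d : ℚ) / 4 :=
            Finset.sum_le_sum (fun ii _ => hterm ii)
        _ = ((d : ℚ) + 1) * (Δ.fNum d : ℚ) / 4 := by
            rw [Finset.sum_const, Finset.card_univ, Fintype.card_fin, nsmul_eq_mul]
            push_cast
            ring
    unfold BalancedComplex.rho
    linarith
  unfold BalancedComplex.genus
  apply Finset.le_min'
  intro y hy
  obtain ⟨ε, -, rfl⟩ := Finset.mem_image.1 hy
  exact hρ ε
end

section
/- Let d ≥ 3 and let Δ be a balanced normal d-pseudomanifold. Then 𝒢(Δ) ≥ 1 + (d−3)·2^{d−2}. In particular, for every closed PL d-manifold M, 𝒢_M ≥ 1 + (d−3)·2^{d−2}. -/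
namespace SComplex

lemma exists_facet (Δ : SComplex) {σ : Finset ℕ} (hσ : σ ∈ Δ.faces) :
    ∃ τ ∈ Δ.facets, σ ⊆ τ := by
  obtain ⟨τ, hτ, hmax⟩ := Finset.exists_max_image (Δ.faces.filter fun τ => σ ⊆ τ)
    Finset.card ⟨σ, Finset.mem_filter.2 ⟨hσ, Finset.Subset.rfl⟩⟩
  rw [Finset.mem_filter] at hτ
  refine ⟨τ, Finset.mem_filter.2 ⟨hτ.1, ?_⟩, hτ.2⟩
  intro τ' hτ' hsub
  exact Finset.eq_of_subset_of_card_le hsub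
    (hmax τ' (Finset.mem_filter.2 ⟨hτ', hτ.2.trans hsub⟩))

lemma facets_subset (Δ : SComplex) : Δ.facets ⊆ Δ.faces := Finset.filter_subset _ _

lemma mem_facets_of_card (Δ : SComplex) {d : ℕ} (hpure : Δ.Pure d) {σ : Finset ℕ}
    (hσ : σ ∈ Δ.faces) (hc : σ.card = d + 1) : σ ∈ Δ.facets := by
  obtain ⟨τ, hτ, hsub⟩ := Δ.exists_facet hσ
  have : σ = τ := Finset.eq_of_subset_of_card_le hsub (by rw [hpure τ hτ, hc])
  rwa [this]


end SComplex

namespace BalancedComplex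

variable {d : ℕ} (Δ : BalancedComplex d)

lemma injOn_face {σ : Finset ℕ} (hσ : σ ∈ Δ.faces) : Set.InjOn Δ.κ ↑σ :=
  fun u hu v hv h => Δ.proper σ hσ u hu v hv h

lemma card_image_face {σ : Finset ℕ} (hσ : σ ∈ Δ.faces) :
    (σ.image Δ.κ).card = σ.card :=
  Finset.card_image_of_injOn (Δ.injOn_face hσ)

lemma facet_image {τ : Finset ℕ} (hpure : Δ.toSComplex.Pure d)
    (hτ : τ ∈ Δ.toSComplex.facets) : τ.image Δ.κ = Finset.univ := by
  apply Finset.eq_univ_of_card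
  rw [Δ.card_image_face (Δ.toSComplex.facets_subset hτ), hpure τ hτ, Fintype.card_fin]

/-- Key degree lemma: a face `σ` with `σ.card + k = d + 1` is contained in at least
`2 ^ k` facets. -/
lemma deg_lower (hpure : Δ.toSComplex.Pure d)
    (h2 : ∀ σ ∈ Δ.faces, σ.card = d → (Δ.toSComplex.facets.filter fun τ => σ ⊆ τ).card = 2) :
    ∀ k : ℕ, ∀ σ ∈ Δ.faces, σ.card + k = d + 1 →
      2 ^ k ≤ (Δ.toSComplex.facets.filter fun τ => σ ⊆ τ).card := by
  intro k
  induction k with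
  | zero =>
    intro σ hσ hc
    have hfac : σ ∈ Δ.toSComplex.facets :=
      Δ.toSComplex.mem_facets_of_card hpure hσ (by omega)
    have : σ ∈ Δ.toSComplex.facets.filter fun τ => σ ⊆ τ :=
      Finset.mem_filter.2 ⟨hfac, Finset.Subset.rfl⟩
    simpa using Finset.card_pos.2 ⟨σ, this⟩
  | succ k ih =>
    intro σ hσ hc
    -- pick a facet containing σ
    obtain ⟨τ, hτf, hστ⟩ := Δ.toSComplex.exists_facet hσ
    have hτfaces := Δ.toSComplex.facets_subset hτf
    have hτcard : τ.card = d + 1 := hpure τ hτf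
    have hτim : τ.image Δ.κ = Finset.univ := Δ.facet_image hpure hτf
    -- pick a color not used by σ
    have himlt : (σ.image Δ.κ).card < d + 1 := by
      rw [Δ.card_image_face hσ]; omega
    obtain ⟨c, hc'⟩ : ∃ c : Fin (d + 1), c ∉ σ.image Δ.κ := by
      by_contra h
      push_neg at h
      have : σ.image Δ.κ = Finset.univ := Finset.eq_univ_iff_forall.2 h
      rw [this, Finset.card_univ, Fintype.card_fin] at himlt
      omega
    -- the vertex of τ of color c
    have hcmem : c ∈ τ.image Δ.κ := hτim ▸ Finset.mem_univ c
    obtain ⟨u, huτ, huc⟩ := Finset.mem_image.1 hcmem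
    have huσ : u ∉ σ := fun h => hc' (Finset.mem_image.2 ⟨u, h, huc⟩)
    -- the d-face τ' = τ.erase u, contained in exactly two facets
    set τ' := τ.erase u with hτ'def
    have hτ'faces : τ' ∈ Δ.faces :=
      Δ.down_closed τ hτfaces τ' (Finset.erase_subset _ _)
    have hτ'card : τ'.card = d := by
      rw [hτ'def, Finset.card_erase_of_mem huτ, hτcard]
      omega
    have h2' := h2 τ' hτ'faces hτ'card
    have hτmem : τ ∈ Δ.toSComplex.facets.filter fun ρ => τ' ⊆ ρ :=
      Finset.mem_filter.2 ⟨hτf, Finset.erase_subset _ _⟩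
    obtain ⟨τ'', hτ''mem, hτ''ne⟩ :=
      Finset.exists_mem_ne
        (s := Δ.toSComplex.facets.filter fun ρ => τ' ⊆ ρ) (h2' ▸ one_lt_two) τ
    rw [Finset.mem_filter] at hτ''mem
    obtain ⟨hτ''f, hτ'τ''⟩ := hτ''mem
    have hτ''faces := Δ.toSComplex.facets_subset hτ''f
    have hτ''card : τ''.card = d + 1 := hpure τ'' hτ''f
    -- the new vertex w of τ''
    obtain ⟨w, hw⟩ : ∃ w, w ∈ τ'' \ τ' := by
      apply Finset.Nonempty.exists_mem
      rw [← Finset.card_pos, Finset.card_sdiff_of_subset hτ'τ'']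
      omega
    rw [Finset.mem_sdiff] at hw
    obtain ⟨hwτ'', hwτ'⟩ := hw
    -- σ ⊆ τ'
    have hστ' : σ ⊆ τ' := fun x hx =>
      Finset.mem_erase.2 ⟨fun h => huσ (h ▸ hx), hστ hx⟩
    -- color of w is c
    have hwc : Δ.κ w = c := by
      by_contra hne
      have him' : τ'.image Δ.κ = Finset.univ.erase c := by
        apply Finset.eq_of_subset_of_card_le
        · intro z hz
          obtain ⟨x, hx, hxz⟩ := Finset.mem_image.1 hz
          have hxτ : x ∈ τ := Finset.mem_of_mem_erase hx
          refine Finset.mem_erase.2 ⟨?_, Finset.mem_univ _⟩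
          intro h
          exact (Finset.mem_erase.1 hx).1
            (Δ.proper τ hτfaces x hxτ u huτ (by rw [hxz, h, huc]))
        · rw [Finset.card_erase_of_mem (Finset.mem_univ c), Finset.card_univ,
            Fintype.card_fin, Δ.card_image_face hτ'faces, hτ'card]
          omega
      have : Δ.κ w ∈ τ'.image Δ.κ := by
        rw [him']
        exact Finset.mem_erase.2 ⟨hne, Finset.mem_univ _⟩
      obtain ⟨x, hx, hxw⟩ := Finset.mem_image.1 this
      exact hwτ' ((Δ.proper τ'' hτ''faces x (hτ'τ'' hx) w hwτ'' hxw) ▸ hx)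
    -- w ≠ u
    have hwu : w ≠ u := by
      intro h
      apply hτ''ne
      apply (Finset.eq_of_subset_of_card_le ?_ (by omega)).symm
      intro x hx
      rcases Finset.decidableMem x τ' with hx' | hx'
      · have : x = u := by
          by_contra hxu
          exact hx' (Finset.mem_erase.2 ⟨hxu, hx⟩)
        rw [this, ← h]; exact hwτ''
      · exact hτ'τ'' hx'
    have hwσ : w ∉ σ := fun h => hc' (Finset.mem_image.2 ⟨w, h, hwc⟩)
    -- the two faces σ ∪ {u}, σ ∪ {w}
    have hu_face : insert u σ ∈ Δ.faces := by
      apply Δ.down_closed τ hτfaces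
      exact Finset.insert_subset huτ hστ
    have hw_face : insert w σ ∈ Δ.faces := by
      apply Δ.down_closed τ'' hτ''faces
      exact Finset.insert_subset hwτ'' (hστ'.trans hτ'τ'')
    have hcu : (insert u σ).card + k = d + 1 := by
      rw [Finset.card_insert_of_notMem huσ]; omega
    have hcw : (insert w σ).card + k = d + 1 := by
      rw [Finset.card_insert_of_notMem hwσ]; omega
    have ihu := ih (insert u σ) hu_face hcu
    have ihw := ih (insert w σ) hw_face hcw
    set A := Δ.toSComplex.facets.filter fun ρ => insert u σ ⊆ ρ with hA
    set B := Δ.toSComplex.facets.filter fun ρ => insert w σ ⊆ ρ with hB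
    have hdisj : Disjoint A B := by
      rw [Finset.disjoint_left]
      intro ρ hρA hρB
      rw [hA, Finset.mem_filter] at hρA
      rw [hB, Finset.mem_filter] at hρB
      have huρ : u ∈ ρ := hρA.2 (Finset.mem_insert_self _ _)
      have hwρ : w ∈ ρ := hρB.2 (Finset.mem_insert_self _ _)
      exact hwu (Δ.proper ρ (Δ.toSComplex.facets_subset hρA.1) w hwρ u huρ
        (by rw [hwc, huc]))
    have hsub : A ∪ B ⊆ Δ.toSComplex.facets.filter fun ρ => σ ⊆ ρ := by
      intro ρ hρ
      rcases Finset.mem_union.1 hρ with h | h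
      · rw [hA, Finset.mem_filter] at h
        exact Finset.mem_filter.2 ⟨h.1, (Finset.subset_insert _ _).trans h.2⟩
      · rw [hB, Finset.mem_filter] at h
        exact Finset.mem_filter.2 ⟨h.1, (Finset.subset_insert _ _).trans h.2⟩
    calc 2 ^ (k + 1) = 2 ^ k + 2 ^ k := by ring
    _ ≤ A.card + B.card := Nat.add_le_add ihu ihw
    _ = (A ∪ B).card := (Finset.card_union_of_disjoint hdisj).symm
    _ ≤ _ := Finset.card_le_card hsub



lemma facets_eq (hpure : Δ.toSComplex.Pure d) :
    Δ.toSComplex.facets = Δ.faces.filter fun σ => σ.card = d + 1 := by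
  ext τ
  rw [Finset.mem_filter]
  constructor
  · intro h
    exact ⟨Δ.toSComplex.facets_subset h, hpure τ h⟩
  · intro h
    exact Δ.toSComplex.mem_facets_of_card hpure h.1 h.2

lemma fiber_bound (hpure : Δ.toSComplex.Pure d)
    (h2 : ∀ σ ∈ Δ.faces, σ.card = d → (Δ.toSComplex.facets.filter fun τ => σ ⊆ τ).card = 2)
    (S : Finset (Fin (d + 1))) :
    Δ.fS S * 2 ^ (d + 1 - S.card) ≤ Δ.toSComplex.facets.card := by
  classical
  set F : Finset ℕ → Finset ℕ := fun τ => τ.filter (fun v => Δ.κ v ∈ S) with hF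
  have hScard : S.card ≤ d + 1 := by
    have := Finset.card_le_card (Finset.subset_univ S)
    rwa [Finset.card_univ, Fintype.card_fin] at this
  have hmem : ∀ τ ∈ Δ.toSComplex.facets, F τ ∈ Δ.faces.filter fun σ => σ.image Δ.κ = S := by
    intro τ hτ
    have hτfaces := Δ.toSComplex.facets_subset hτ
    refine Finset.mem_filter.2 ⟨Δ.down_closed τ hτfaces _ (Finset.filter_subset _ _), ?_⟩
    apply Finset.Subset.antisymm
    · intro z hz
      obtain ⟨x, hx, hxz⟩ := Finset.mem_image.1 hz
      exact hxz ▸ (Finset.mem_filter.1 hx).2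
    · intro c hc
      have : c ∈ τ.image Δ.κ := (Δ.facet_image hpure hτ) ▸ Finset.mem_univ c
      obtain ⟨v, hv, hvc⟩ := Finset.mem_image.1 this
      exact Finset.mem_image.2 ⟨v, Finset.mem_filter.2 ⟨hv, hvc ▸ hc⟩, hvc⟩
  have hsum := Finset.card_eq_sum_card_fiberwise hmem
  rw [hsum]
  have hbound : ∀ σ ∈ Δ.faces.filter (fun σ => σ.image Δ.κ = S),
      2 ^ (d + 1 - S.card) ≤ (Δ.toSComplex.facets.filter fun τ => F τ = σ).card := by
    intro σ hσ
    rw [Finset.mem_filter] at hσ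
    obtain ⟨hσfaces, hσim⟩ := hσ
    have hσcard : σ.card = S.card := by rw [← hσim, Δ.card_image_face hσfaces]
    have hfiber : (Δ.toSComplex.facets.filter fun τ => F τ = σ) =
        Δ.toSComplex.facets.filter fun τ => σ ⊆ τ := by
      apply Finset.filter_congr
      intro τ hτ
      have hτfaces := Δ.toSComplex.facets_subset hτ
      constructor
      · intro h
        exact h ▸ Finset.filter_subset _ _
      · intro h
        have hsub : σ ⊆ F τ := fun v hv =>
          Finset.mem_filter.2 ⟨h hv, hσim ▸ Finset.mem_image.2 ⟨v, hv, rfl⟩⟩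
        have hc1 : (F τ).card = S.card := by
          have h1 := (Finset.mem_filter.1 (hmem τ hτ)).2
          rw [← h1, Δ.card_image_face (Finset.mem_filter.1 (hmem τ hτ)).1]
        exact (Finset.eq_of_subset_of_card_le hsub (by omega)).symm
    rw [hfiber]
    exact Δ.deg_lower hpure h2 (d + 1 - S.card) σ hσfaces (by omega)
  calc Δ.fS S * 2 ^ (d + 1 - S.card)
      = (Δ.faces.filter fun σ => σ.image Δ.κ = S).card • 2 ^ (d + 1 - S.card) := by
        rw [fS, smul_eq_mul]
    _ ≤ _ := Finset.card_nsmul_le_sum _ _ _ hbound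

lemma facets_card_lower (hne : Δ.faces.Nonempty) (hpure : Δ.toSComplex.Pure d)
    (h2 : ∀ σ ∈ Δ.faces, σ.card = d → (Δ.toSComplex.facets.filter fun τ => σ ⊆ τ).card = 2) :
    2 ^ (d + 1) ≤ Δ.toSComplex.facets.card := by
  have hempty : (∅ : Finset ℕ) ∈ Δ.faces := by
    obtain ⟨σ, hσ⟩ := hne
    exact Δ.down_closed σ hσ ∅ (Finset.empty_subset σ)
  have := Δ.deg_lower hpure h2 (d + 1) ∅ hempty (by simp)
  calc 2 ^ (d + 1) ≤ (Δ.toSComplex.facets.filter fun τ => ∅ ⊆ τ).card := this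
    _ ≤ Δ.toSComplex.facets.card := Finset.card_le_card (Finset.filter_subset _ _)

lemma rho_ge {d : ℕ} (Δ : BalancedComplex d) (hd : 3 ≤ d)
    (hne : Δ.faces.Nonempty) (hpure : Δ.toSComplex.Pure d)
    (h2 : ∀ σ ∈ Δ.faces, σ.card = d → (Δ.toSComplex.facets.filter fun τ => σ ⊆ τ).card = 2)
    (ε : Equiv.Perm (Fin (d + 1))) :
    1 + ((d : ℚ) - 3) * 2 ^ (d - 2) ≤ Δ.rho ε := by
  have hFd : Δ.fNum d = Δ.toSComplex.facets.card := by
    rw [fNum, ← Δ.facets_eq hpure]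
  set Fc := Δ.toSComplex.facets.card with hFc
  have hF : (2 : ℚ) ^ (d + 1) ≤ (Fc : ℚ) := by
    exact_mod_cast Δ.facets_card_lower hne hpure h2
  -- bound each summand
  have hterm : ∀ i : Fin (d + 1),
      (Δ.fS (Finset.univ \ {ε i, ε (i + 1)}) : ℚ) ≤ (Fc : ℚ) / 4 := by
    intro i
    have hii : i ≠ i + 1 := by
      intro h
      have h0 : (0 : Fin (d + 1)) = 1 := by
        have := congrArg (· - i) h
        simpa using this
      have := congrArg Fin.val h0
      simp [Fin.val_one] at this
      omega
    have hεne : ε i ≠ ε (i + 1) := fun h => hii (ε.injective h)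
    set S := Finset.univ \ {ε i, ε (i + 1)} with hS
    have hScard : S.card = d - 1 := by
      rw [hS, Finset.card_sdiff_of_subset (Finset.subset_univ _), Finset.card_univ,
        Fintype.card_fin, Finset.card_pair hεne]
      omega
    have hb := Δ.fiber_bound hpure h2 S
    have hk : d + 1 - S.card = 2 := by omega
    rw [hk] at hb
    have hb' : (Δ.fS S : ℚ) * 4 ≤ (Fc : ℚ) := by exact_mod_cast hb
    linarith
  have hsum : ∑ i : Fin (d + 1), (Δ.fS (Finset.univ \ {ε i, ε (i + 1)}) : ℚ)
      ≤ ((d : ℚ) + 1) * ((Fc : ℚ) / 4) := by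
    calc ∑ i : Fin (d + 1), (Δ.fS (Finset.univ \ {ε i, ε (i + 1)}) : ℚ)
        ≤ ∑ _i : Fin (d + 1), (Fc : ℚ) / 4 := by
            apply Finset.sum_le_sum
            intro i _
            exact hterm i
      _ = ((d : ℚ) + 1) * ((Fc : ℚ) / 4) := by
          rw [Finset.sum_const, Finset.card_univ, Fintype.card_fin, nsmul_eq_mul]
          push_cast
          ring
  have hd3 : (3 : ℚ) ≤ (d : ℚ) := by exact_mod_cast hd
  have h8 : (2 : ℚ) ^ (d + 1) = 2 ^ (d - 2) * 8 := by
    have hh : d + 1 = (d - 2) + 3 := by omega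
    rw [hh, pow_add]
    norm_num
  have hmul : (((d : ℚ) - 3) / 8) * 2 ^ (d + 1) ≤ (((d : ℚ) - 3) / 8) * (Fc : ℚ) :=
    mul_le_mul_of_nonneg_left hF (by linarith)
  rw [rho, hFd]
  rw [h8] at hmul
  nlinarith [hsum, hmul]

theorem genus_ge {d : ℕ} (Δ : BalancedComplex d) (hd : 3 ≤ d)
    (hP : Δ.toSComplex.IsNormalPseudomanifold d) :
    1 + ((d : ℚ) - 3) * 2 ^ (d - 2) ≤ Δ.genus := by
  obtain ⟨hne, hpure, h2, -, -⟩ := hP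
  apply Finset.le_min'
  intro y hy
  obtain ⟨ε, -, rfl⟩ := Finset.mem_image.1 hy
  exact Δ.rho_ge hd hne hpure h2 ε

end BalancedComplex

/-- Let `d ≥ 3` and let `Δ` be a balanced normal `d`-pseudomanifold.
Then `𝒢(Δ) ≥ 1 + (d-3)·2^(d-2)`.  In particular, for every closed PL `d`-manifold `M`
(and every balanced triangulation `Δ` of `M`), `𝒢_M ≥ 1 + (d-3)·2^(d-2)`. -/
theorem statement6 (d : ℕ) (hd : 3 ≤ d) :
    (∀ Δ : BalancedComplex d, Δ.toSComplex.IsNormalPseudomanifold d →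
      1 + ((d : ℚ) - 3) * 2 ^ (d - 2) ≤ Δ.genus) ∧
    (∀ (M : Type) [TopologicalSpace M] [CompactSpace M] [T2Space M]
      [ChartedSpace (EuclideanSpace ℝ (Fin d)) M],
      ∀ Δ : BalancedComplex d, Δ.toSComplex.IsNormalPseudomanifold d →
        Nonempty (↥Δ.toSComplex.carrier ≃ₜ M) →
        1 + ((d : ℚ) - 3) * 2 ^ (d - 2) ≤ Δ.genus) :=
  ⟨fun Δ hP => Δ.genus_ge hd hP,
   fun _M _ _ _ _ Δ hP _ => Δ.genus_ge hd hP⟩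
end
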